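/- arXiv:2312.04797 — 2 statements merged into one kernel-verified Lean document; each statement's English description precedes it below -/
import Mathlib

section
/- For every integer n ≥ 3 with n ≠ 5, the number of signless Laplacian eigenvalues of the cycle C_n in the interval [0,1) equals ⌈n/3⌉ if n ≡ 2 (mod 3), and equals ⌈n/3⌉ − 1 if n ≡ 0 or 1 (mod 3). -/
open Matrix

/-- The signless Laplacian matrix of a finite simple graph: the diagonal degree matrix
plus the adjacency matrix. -/
noncomputable def sLap {V : Type*} [Fintype V] [DecidableEq V] (G : SimpleGraph V) :
    Matrix V V ℝ :=
  letI := Classical.decRel G.Adj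
  Matrix.diagonal (fun v => (G.degree v : ℝ)) + G.adjMatrix ℝ

/-- The multiset of signless Laplacian eigenvalues of `G`, i.e. the roots (with
multiplicity) of the characteristic polynomial of the signless Laplacian matrix. -/
noncomputable def qSpec {V : Type*} [Fintype V] [DecidableEq V] (G : SimpleGraph V) :
    Multiset ℝ :=
  (sLap G).charpoly.roots

/-- The number of signless Laplacian eigenvalues of `G` lying in `I`, counted with
multiplicity. -/
noncomputable def qCount {V : Type*} [Fintype V] [DecidableEq V] (G : SimpleGraph V)
    (I : Set ℝ) : ℕ :=
  letI := Classical.decPred fun x : ℝ => x ∈ I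
  Multiset.countP (fun x => x ∈ I) (qSpec G)

/-- The `k`-th largest signless Laplacian eigenvalue of `G` (1-indexed), i.e. `q_k(G)`:
the entry at position `card V - k` of the list of eigenvalues sorted in nondecreasing
order. -/
noncomputable def qEig {V : Type*} [Fintype V] [DecidableEq V] (G : SimpleGraph V)
    (k : ℕ) : ℝ :=
  ((qSpec G).sort (· ≤ ·)).getD (Fintype.card V - k) 0

/-- The matching number `ν(G)` of `G`: the number of edges of a maximum matching. -/
noncomputable def matchingNumber {V : Type*} [Fintype V] (G : SimpleGraph V) : ℕ :=
  sSup {k | ∃ M : G.Subgraph, M.IsMatching ∧ M.edgeSet.ncard = k}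

/-- The independence number `α(G)` of `G`: the maximum size of a set of pairwise
nonadjacent vertices. -/
noncomputable def indepNum {V : Type*} [Fintype V] (G : SimpleGraph V) : ℕ :=
  sSup {k | ∃ s : Finset V, (∀ u ∈ s, ∀ v ∈ s, ¬ G.Adj u v) ∧ s.card = k}

section Aux

open Matrix Polynomial Real

private lemma cycle_adj (m : ℕ) (i j : Fin (m+3)) :
    (SimpleGraph.cycleGraph (m+3)).Adj i j ↔ (j = i - 1 ∨ j = i + 1) := by
  rw [SimpleGraph.cycleGraph_adj']
  have hone : (1 : Fin (m+3)).val = 1 := by simp [Fin.val_one']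
  have e1 : (i - j).val = 1 ↔ j = i - 1 := by
    rw [show (1:ℕ) = (1 : Fin (m+3)).val from hone.symm, ← Fin.ext_iff,
      sub_eq_iff_eq_add, eq_sub_iff_add_eq, add_comm 1 j]
    exact eq_comm
  have e2 : (j - i).val = 1 ↔ j = i + 1 := by
    rw [show (1:ℕ) = (1 : Fin (m+3)).val from hone.symm, ← Fin.ext_iff,
      sub_eq_iff_eq_add, add_comm 1 i]
  rw [e1, e2]

private lemma add_one_ne_sub_one (m : ℕ) (i : Fin (m+3)) : i + 1 ≠ i - 1 := by
  intro h
  have h2 : (2 : Fin (m+3)) = 0 := by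
    have := sub_eq_zero.mpr h
    open Fin.CommRing in rwa [add_sub_sub_cancel, one_add_one_eq_two] at this
  have hv : (2 : Fin (m+3)).val = 2 := by simp [Fin.val_two]
  rw [h2] at hv
  simp at hv

private lemma sLap_cycle_apply (m : ℕ) (i j : Fin (m+3)) :
    sLap (SimpleGraph.cycleGraph (m+3)) i j =
      (if j = i then 2 else 0) + (if j = i + 1 then 1 else 0)
        + (if j = i - 1 then 1 else 0) := by
  classical
  have hdeg : (SimpleGraph.cycleGraph (m+3)).degree i = 2 :=
    SimpleGraph.cycleGraph_degree_three_le
  rw [sLap, Matrix.add_apply, SimpleGraph.adjMatrix_apply]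
  by_cases h1 : j = i
  · subst h1
    rw [if_pos rfl, if_neg (show j ≠ j + 1 by simp),
      if_neg (show j ≠ j - 1 by rw [ne_eq, eq_sub_iff_add_eq]; simp),
      if_neg ((SimpleGraph.cycleGraph (m+3)).irrefl (v := j)),
      Matrix.diagonal_apply_eq]
    norm_num
    norm_cast
    convert hdeg using 2
  · rw [if_neg h1, Matrix.diagonal_apply_ne _ (fun h => h1 h.symm)]
    have hadj := cycle_adj m i j
    by_cases h2 : j = i + 1
    · have h3 : j ≠ i - 1 := h2 ▸ add_one_ne_sub_one m i
      rw [if_pos h2, if_neg h3, if_pos (hadj.mpr (Or.inr h2))]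
      norm_num
    · by_cases h3 : j = i - 1
      · rw [if_pos h3, if_neg h2, if_pos (hadj.mpr (Or.inl h3))]
        norm_num
      · rw [if_neg h2, if_neg h3, if_neg (fun h => (hadj.mp h).elim h3 h2)]
        norm_num

private lemma charpoly_cycle (m : ℕ) :
    (sLap (SimpleGraph.cycleGraph (m+3))).charpoly =
      ∏ k : Fin (m+3), (X - C (2 + 2 * Real.cos (2 * π * k.val / (m+3)))) := by
  classical
  have hN0 : (m+3 : ℕ) ≠ 0 := by omega
  set ω : ℂ := Complex.exp (2 * (π:ℂ) * Complex.I / ((m+3 : ℕ) : ℂ)) with hω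
  have hprim : IsPrimitiveRoot ω (m+3) := Complex.isPrimitiveRoot_exp (m+3) hN0
  have hωn : ω ^ (m+3 : ℕ) = 1 := hprim.pow_eq_one
  have hpowmod : ∀ a : ℕ, ω ^ (a % (m+3)) = ω ^ a := by
    intro a
    conv_rhs => rw [← Nat.div_add_mod a (m+3)]
    rw [pow_add, pow_mul, hωn, one_pow, one_mul]
  set χ : Fin (m+3) → ℂ := fun j => ω ^ (j.val) with hχdef
  have hχ : ∀ a b : Fin (m+3), χ (a + b) = χ a * χ b := by
    intro a b
    show ω ^ ((a + b).val) = ω ^ a.val * ω ^ b.val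
    rw [Fin.val_add, hpowmod, pow_add]
  have hχ0 : χ 0 = 1 := by simp [hχdef]
  have hχneg : ∀ a : Fin (m+3), χ a * χ (-a) = 1 := by
    intro a; rw [← hχ, add_neg_cancel, hχ0]
  set lam : Fin (m+3) → ℝ := fun k => 2 + 2 * Real.cos (2 * π * k.val / (m+3)) with hlam
  set μ : Fin (m+3) → ℂ := fun k => ((lam k : ℝ) : ℂ) with hμdef
  have hμ : ∀ k, μ k = 2 + χ k + χ (-k) := by
    intro k
    have hθ : χ k = Complex.exp (((2 * π * k.val / (m+3) : ℝ) : ℂ) * Complex.I) := by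
      show ω ^ (k.val) = _
      rw [hω, ← Complex.exp_nat_mul]
      congr 1
      push_cast
      ring
    have hθ' : χ (-k) = Complex.exp (-(((2 * π * k.val / (m+3) : ℝ) : ℂ) * Complex.I)) := by
      have h1 : χ (-k) = (χ k)⁻¹ :=
        eq_inv_of_mul_eq_one_left (by rw [mul_comm]; exact hχneg k)
      rw [h1, hθ, ← Complex.exp_neg]
    have h2c := Complex.two_cos (x := ((2 * π * k.val / (m+3) : ℝ) : ℂ))
    rw [neg_mul] at h2c
    rw [hθ, hθ', hμdef, hlam]
    show ((2 + 2 * Real.cos (2 * π * k.val / (m+3)) : ℝ) : ℂ) = _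
    rw [Complex.ofReal_add, Complex.ofReal_mul, Complex.ofReal_cos]
    simp only [Complex.ofReal_ofNat]
    linear_combination h2c
  set F : Matrix (Fin (m+3)) (Fin (m+3)) ℂ :=
    Matrix.vandermonde (fun i : Fin (m+3) => ω ^ (i.val)) with hFdef
  have hF : ∀ i k : Fin (m+3), F i k = χ (i * k) := by
    intro i k
    show (ω ^ (i.val)) ^ (k.val) = ω ^ ((i * k).val)
    rw [Fin.val_mul, hpowmod, pow_mul]
  set Q : Matrix (Fin (m+3)) (Fin (m+3)) ℝ := sLap (SimpleGraph.cycleGraph (m+3)) with hQdef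
  set Qc : Matrix (Fin (m+3)) (Fin (m+3)) ℂ := Q.map Complex.ofRealHom with hQcdef
  have key : Qc * F = F * Matrix.diagonal μ := by
    ext i k
    rw [Matrix.mul_apply, Matrix.mul_diagonal]
    have hterm : ∀ j : Fin (m+3), Qc i j * F j k =
        (if j = i then 2 * χ (j * k) else 0) + (if j = i + 1 then χ (j * k) else 0)
          + (if j = i - 1 then χ (j * k) else 0) := by
      intro j
      rw [hQcdef, Matrix.map_apply, Complex.ofRealHom_eq_coe, hQdef, sLap_cycle_apply, hF]
      push_cast [apply_ite (Complex.ofReal)]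
      split_ifs <;> ring
    rw [Finset.sum_congr rfl (fun j _ => hterm j)]
    rw [Finset.sum_add_distrib, Finset.sum_add_distrib,
      Finset.sum_ite_eq' Finset.univ i, Finset.sum_ite_eq' Finset.univ (i+1),
      Finset.sum_ite_eq' Finset.univ (i-1)]
    simp only [Finset.mem_univ, if_true]
    rw [hF, hμ k]
    have e1 : (i + 1) * k = i * k + k := by open Fin.CommRing in ring
    have e2 : (i - 1) * k = i * k + (-k) := by open Fin.CommRing in ring
    rw [e1, e2, hχ, hχ]
    ring
  have hdetF : F.det ≠ 0 := by
    rw [hFdef, Matrix.det_vandermonde]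
    apply Finset.prod_ne_zero_iff.mpr
    intro i _
    apply Finset.prod_ne_zero_iff.mpr
    intro j hj
    rw [Finset.mem_Ioi] at hj
    apply sub_ne_zero.mpr
    intro h
    exact absurd (Fin.ext (hprim.pow_inj j.isLt i.isLt h)) (ne_of_gt hj)
  set Fc : Matrix (Fin (m+3)) (Fin (m+3)) ℂ[X] := F.map C with hFcdef
  have hcomm : charmatrix Qc * Fc = Fc * charmatrix (Matrix.diagonal μ) := by
    rw [charmatrix, charmatrix, sub_mul, mul_sub]
    congr 1
    · exact (Matrix.scalar_commute (X : ℂ[X]) (fun r => Commute.all X r) Fc)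
    · show Qc.map C * F.map C = F.map C * (Matrix.diagonal μ).map C
      rw [← Matrix.map_mul, key, Matrix.map_mul]
  have hdet2 : (charmatrix Qc).det = (charmatrix (Matrix.diagonal μ)).det := by
    have h1 := congrArg Matrix.det hcomm
    rw [Matrix.det_mul, Matrix.det_mul] at h1
    have h2 : Fc.det = C F.det := (RingHom.map_det (C : ℂ →+* ℂ[X]) F).symm
    have h3 : (C F.det : ℂ[X]) ≠ 0 := fun hc => hdetF (Polynomial.C_eq_zero.mp hc)
    apply mul_right_cancel₀ h3
    rw [← h2, h1, mul_comm]
  have hdiag : (charmatrix (Matrix.diagonal μ)).det = ∏ k, (X - C (μ k)) := by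
    have : charmatrix (Matrix.diagonal μ) = Matrix.diagonal (fun k => X - C (μ k)) := by
      ext i j
      by_cases h : i = j
      · subst h; simp
      · rw [charmatrix_apply_ne _ _ _ h, Matrix.diagonal_apply_ne _ h,
          Matrix.diagonal_apply_ne _ h, map_zero, neg_zero]
    rw [this, Matrix.det_diagonal]
  have hcharQc : Qc.charpoly = ∏ k, (X - C (μ k)) := hdet2.trans hdiag
  have hmap : Q.charpoly.map Complex.ofRealHom = Qc.charpoly :=
    (Matrix.charpoly_map Q Complex.ofRealHom).symm
  have hprodmap : (∏ k : Fin (m+3), (X - C (lam k))).map Complex.ofRealHom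
      = ∏ k, (X - C (μ k)) := by
    rw [Polynomial.map_prod]
    apply Finset.prod_congr rfl
    intro k _
    rw [Polynomial.map_sub, Polynomial.map_X, Polynomial.map_C]
    rfl
  exact Polynomial.map_injective Complex.ofRealHom Complex.ofReal_injective
    (hmap.trans (hcharQc.trans hprodmap.symm))

private lemma qSpec_cycle (m : ℕ) :
    qSpec (SimpleGraph.cycleGraph (m+3)) =
      (Finset.univ.val : Multiset (Fin (m+3))).map
        (fun k => 2 + 2 * Real.cos (2 * π * k.val / (m+3))) := by
  rw [qSpec, charpoly_cycle, Finset.prod_eq_multiset_prod,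
    ← Polynomial.roots_multiset_prod_X_sub_C (Multiset.map
      (fun k : Fin (m+3) => 2 + 2 * Real.cos (2 * π * k.val / (m+3))) Finset.univ.val)]
  congr 1
  rw [Multiset.map_map]
  rfl

private lemma ceil_third (n : ℕ) : ⌈(n : ℚ) / 3⌉₊ = (n + 2) / 3 := by
  obtain ⟨q, r, hr, rfl⟩ : ∃ q r, r < 3 ∧ n = 3 * q + r :=
    ⟨n / 3, n % 3, Nat.mod_lt _ (by norm_num), (Nat.div_add_mod n 3).symm⟩
  have hc : ((3 * q + r : ℕ) : ℚ) / 3 = q + r / 3 := by push_cast; ring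
  interval_cases r
  · rw [hc]
    rw [show (3 * q + 0 + 2) / 3 = q by omega]
    norm_num
  · rw [hc, show (3 * q + 1 + 2) / 3 = q + 1 by omega,
      Nat.ceil_eq_iff (by omega)]
    constructor <;> push_cast <;> linarith
  · rw [hc, show (3 * q + 2 + 2) / 3 = q + 1 by omega,
      Nat.ceil_eq_iff (by omega)]
    constructor <;> push_cast <;> linarith

private lemma cos_lt_neg_half (n k : ℕ) (hn : 3 ≤ n) (hk : k < n) :
    Real.cos (2 * π * k / n) < -(1/2) ↔ (n < 3 * k ∧ 3 * k < 2 * n) := by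
  have hπ := Real.pi_pos
  have hn0 : (0:ℝ) < n := by positivity
  set θ := 2 * π * k / n with hθ
  have hθ0 : 0 ≤ θ := by positivity
  have hθlt : θ < 2 * π := by
    rw [hθ, div_lt_iff₀ hn0]
    have : (k:ℝ) < n := by exact_mod_cast hk
    nlinarith
  have h23 : Real.cos (2 * π / 3) = -(1/2) := by
    rw [show 2 * π / 3 = π - π / 3 by ring, Real.cos_pi_sub, Real.cos_pi_div_three]
  have key : Real.cos θ < -(1/2) ↔ (2 * π / 3 < θ ∧ θ < 4 * π / 3) := by
    constructor
    · intro h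
      by_contra hc
      push_neg at hc
      rcases le_or_gt θ (2 * π / 3) with h1 | h1
      · have := Real.strictAntiOn_cos.antitoneOn ⟨hθ0, by linarith⟩
          ⟨by positivity, by linarith⟩ h1
        rw [h23] at this; linarith
      · have h2 := hc h1
        have h3 : 2 * π - θ ≤ 2 * π / 3 := by linarith
        have := Real.strictAntiOn_cos.antitoneOn ⟨by linarith, by linarith⟩
          ⟨by positivity, by linarith⟩ h3
        rw [h23, Real.cos_two_pi_sub] at this; linarith
    · rintro ⟨h1, h2⟩
      rcases le_or_gt θ π with h3 | h3
      · have := Real.strictAntiOn_cos ⟨by positivity, by linarith⟩ ⟨hθ0, h3⟩ h1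
        rw [h23] at this; linarith
      · have h4 : 2 * π / 3 < 2 * π - θ := by linarith
        have := Real.strictAntiOn_cos ⟨by positivity, by linarith⟩
          ⟨by linarith, by linarith⟩ h4
        rw [h23, Real.cos_two_pi_sub] at this; linarith
  rw [key, hθ]
  constructor
  · rintro ⟨h1, h2⟩
    constructor
    · have : (n:ℝ) < 3 * k := by
        rw [div_lt_div_iff₀ (by norm_num) hn0] at h1
        nlinarith
      exact_mod_cast this
    · have : (3:ℝ) * k < 2 * n := by
        rw [div_lt_div_iff₀ hn0 (by norm_num)] at h2
        nlinarith
      exact_mod_cast this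
  · rintro ⟨h1, h2⟩
    have h1' : (n:ℝ) < 3 * k := by exact_mod_cast h1
    have h2' : (3:ℝ) * k < 2 * n := by exact_mod_cast h2
    constructor
    · rw [div_lt_div_iff₀ (by norm_num) hn0]; nlinarith
    · rw [div_lt_div_iff₀ hn0 (by norm_num)]; nlinarith

end Aux

open Polynomial Real in
/-- For every integer `n ≥ 3` with `n ≠ 5`, the number of signless Laplacian
eigenvalues of the cycle `C_n` in `[0, 1)` equals `⌈n/3⌉` if `n ≡ 2 (mod 3)` and
`⌈n/3⌉ - 1` if `n ≡ 0, 1 (mod 3)`. -/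
theorem cycle_count_eq (n : ℕ) (hn : 3 ≤ n) (h5 : n ≠ 5) :
    qCount (SimpleGraph.cycleGraph n) (Set.Ico 0 1) =
      if n % 3 = 2 then ⌈(n : ℚ) / 3⌉₊ else ⌈(n : ℚ) / 3⌉₊ - 1 := by
  classical
  obtain ⟨m, rfl⟩ : ∃ m, n = m + 3 := ⟨n - 3, by omega⟩
  rw [qCount, qSpec_cycle, Multiset.countP_map]
  have hcond : ∀ k : Fin (m+3),
      ((2 + 2 * Real.cos (2 * π * k.val / (m+3)) : ℝ) ∈ Set.Ico (0:ℝ) 1) ↔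
        (m+3 < 3 * k.val ∧ 3 * k.val < 2 * (m+3)) := by
    intro k
    have harg : (2 * π * (k.val : ℝ) / (((m+3:ℕ)):ℝ)) = 2 * π * k.val / ((m:ℝ)+3) := by
      push_cast; ring
    have hiff := cos_lt_neg_half (m+3) k.val (by omega) k.isLt
    rw [harg] at hiff
    rw [Set.mem_Ico, ← hiff]
    have hc1 := Real.neg_one_le_cos (2 * π * (k.val:ℝ) / ((m:ℝ)+3))
    constructor
    · rintro ⟨h0, h1⟩; linarith
    · intro h; constructor <;> linarith
  simp only [hcond]
  have h2 : Multiset.card (Multiset.filter (fun k : Fin (m+3) =>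
        (m+3 < 3 * k.val ∧ 3 * k.val < 2 * (m+3))) Finset.univ.val)
      = (Finset.univ.filter (fun k : Fin (m+3) =>
        (m+3 < 3 * k.val ∧ 3 * k.val < 2 * (m+3)))).card := rfl
  rw [h2]
  have h3 : (Finset.univ.filter (fun k : Fin (m+3) =>
        (m+3 < 3 * k.val ∧ 3 * k.val < 2 * (m+3)))).card
      = ((Finset.range (m+3)).filter (fun a =>
          (m+3 < 3 * a ∧ 3 * a < 2 * (m+3)))).card := by
    apply Finset.card_bij (fun a _ => a.val)
    · intro a ha
      simp only [Finset.mem_filter, Finset.mem_range]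
      exact ⟨a.isLt, (Finset.mem_filter.mp ha).2⟩
    · intro a ha b hb h
      exact Fin.ext h
    · intro b hb
      simp only [Finset.mem_filter, Finset.mem_range] at hb
      exact ⟨⟨b, hb.1⟩, Finset.mem_filter.mpr ⟨Finset.mem_univ _, hb.2⟩, rfl⟩
  rw [h3]
  have h4 : (Finset.range (m+3)).filter (fun a => (m+3 < 3 * a ∧ 3 * a < 2 * (m+3)))
      = Finset.Ico ((m+3)/3 + 1) ((2*(m+3)+2)/3) := by
    ext a
    simp only [Finset.mem_filter, Finset.mem_range, Finset.mem_Ico]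
    omega
  rw [h4, Nat.card_Ico, ceil_third]
  split_ifs with h <;> omega
end

section
/- For every finite simple graph G on n vertices, the independence number α(G) satisfies α(G) ≤ m_G[δ(G), 2n−2], i.e. G has at least α(G) signless Laplacian eigenvalues in the closed interval [δ(G), 2n−2], where δ(G) is the minimum degree of G. -/
open Matrix

/-- The minimum degree `δ(G)` of a graph. -/
noncomputable def minDeg {V : Type*} [Fintype V] (G : SimpleGraph V) : ℕ :=
  letI := Classical.decRel G.Adj
  G.minDegree

section Aux

open Polynomial

variable {V : Type*} [Fintype V] [DecidableEq V]

lemma charpoly_conj_aux (P Pi M : Matrix V V ℝ) (h1 : P * Pi = 1) :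
    (P * M * Pi).charpoly = M.charpoly := by
  have key : charmatrix (P * M * Pi) = P.map C * charmatrix M * Pi.map C := by
    simp only [charmatrix, RingHom.mapMatrix_apply]
    rw [Matrix.mul_sub, Matrix.sub_mul]
    congr 1
    · rw [mul_assoc, scalar_commute (X : ℝ[X]) (fun r => (Commute.all _ r)) (Pi.map C),
        ← mul_assoc, ← Matrix.map_mul, h1]
      simp
    · rw [← Matrix.map_mul, ← Matrix.map_mul]
  have hdet : (P.map (C : ℝ →+* ℝ[X])).det * (Pi.map (C : ℝ →+* ℝ[X])).det = 1 := by
    rw [← det_mul, ← Matrix.map_mul, h1]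
    simp
  rw [Matrix.charpoly, key, det_mul, det_mul, Matrix.charpoly, mul_comm ((P.map C).det),
    mul_assoc, hdet, mul_one]

lemma charpoly_diagonal_aux (d : V → ℝ) :
    (Matrix.diagonal d).charpoly = ∏ i, (X - C (d i)) := by
  have : charmatrix (Matrix.diagonal d) = Matrix.diagonal (fun i => (X : ℝ[X]) - C (d i)) := by
    ext i j
    by_cases h : i = j
    · subst h; simp [charmatrix_apply_eq]
    · simp [charmatrix_apply_ne _ _ _ h, Matrix.diagonal_apply_ne _ h]
  rw [Matrix.charpoly, this, det_diagonal]

lemma roots_charpoly_aux (M : Matrix V V ℝ) (hM : M.IsHermitian) :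
    M.charpoly.roots = Multiset.map hM.eigenvalues Finset.univ.val := by
  have hsp := hM.spectral_theorem
  have h1 : (hM.eigenvectorUnitary : Matrix V V ℝ) * star (hM.eigenvectorUnitary : Matrix V V ℝ)
      = 1 := (Matrix.mem_unitaryGroup_iff).mp hM.eigenvectorUnitary.2
  have heq : M.charpoly = (Matrix.diagonal hM.eigenvalues).charpoly := by
    conv_lhs => rw [hsp]
    rw [show (RCLike.ofReal ∘ hM.eigenvalues : V → ℝ) = hM.eigenvalues by ext; simp]
    exact charpoly_conj_aux _ _ _ h1
  rw [heq, charpoly_diagonal_aux]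
  have : ∏ i, ((X : ℝ[X]) - C (hM.eigenvalues i))
      = (Multiset.map (fun a => (X : ℝ[X]) - C a)
          (Multiset.map hM.eigenvalues Finset.univ.val)).prod := by
    rw [Multiset.map_map]; rfl
  rw [this, roots_multiset_prod_X_sub_C]

/-- The eigenvectors of a real symmetric matrix, as plain functions. -/
noncomputable def wvec {M : Matrix V V ℝ} (hM : M.IsHermitian) : V → (V → ℝ) :=
  fun i => (WithLp.equiv 2 (V → ℝ)) (hM.eigenvectorBasis i)

lemma wvec_mul {M : Matrix V V ℝ} (hM : M.IsHermitian) (i : V) :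
    M *ᵥ wvec hM i = hM.eigenvalues i • wvec hM i :=
  hM.mulVec_eigenvectorBasis i

lemma wvec_dot {M : Matrix V V ℝ} (hM : M.IsHermitian) (i j : V) :
    wvec hM i ⬝ᵥ wvec hM j = if i = j then 1 else 0 := by
  have h := orthonormal_iff_ite.mp hM.eigenvectorBasis.orthonormal i j
  rw [dotProduct_comm]
  simpa [PiLp.inner_apply, RCLike.inner_apply, dotProduct, wvec] using h

lemma wvec_repr {M : Matrix V V ℝ} (hM : M.IsHermitian) (x : V → ℝ) :
    ∑ i, (wvec hM i ⬝ᵥ x) • wvec hM i = x := by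
  have h := hM.eigenvectorBasis.sum_repr ((WithLp.equiv 2 (V → ℝ)).symm x)
  have h2 := congrArg (WithLp.linearEquiv 2 ℝ (V → ℝ)) h
  rw [map_sum] at h2
  simp only [_root_.map_smul, WithLp.linearEquiv_apply, Equiv.apply_symm_apply, AddEquiv.toFun_eq_coe, WithLp.coe_addEquiv, WithLp.equiv_symm_apply, WithLp.ofLp_toLp] at h2
  conv_rhs => rw [← h2]
  refine Finset.sum_congr rfl fun i _ => ?_
  congr 1
  rw [hM.eigenvectorBasis.repr_apply_apply]
  simp [PiLp.inner_apply, RCLike.inner_apply, dotProduct, wvec, mul_comm]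

omit [DecidableEq V] in
lemma sum_dotProduct' {ι : Type*} (s : Finset ι) (f : ι → V → ℝ) (v : V → ℝ) :
    (∑ i ∈ s, f i) ⬝ᵥ v = ∑ i ∈ s, f i ⬝ᵥ v := by
  simp only [dotProduct, Finset.sum_apply, Finset.sum_mul]
  rw [Finset.sum_comm]

omit [DecidableEq V] in
lemma dotProduct_sum' {ι : Type*} (s : Finset ι) (v : V → ℝ) (f : ι → V → ℝ) :
    v ⬝ᵥ (∑ i ∈ s, f i) = ∑ i ∈ s, v ⬝ᵥ f i := by
  simp only [dotProduct, Finset.sum_apply, Finset.mul_sum]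
  rw [Finset.sum_comm]

lemma wvec_norm {M : Matrix V V ℝ} (hM : M.IsHermitian) (c : V → ℝ) :
    (∑ i, c i • wvec hM i) ⬝ᵥ (∑ j, c j • wvec hM j) = ∑ i, c i ^ 2 := by
  rw [sum_dotProduct' _ _ _]
  refine Finset.sum_congr rfl fun i _ => ?_
  rw [smul_dotProduct, dotProduct_sum' _ _ _]
  simp only [dotProduct_smul, wvec_dot, smul_eq_mul, mul_ite, mul_one, mul_zero]
  simp [Finset.sum_ite_eq]
  ring

lemma wvec_mulsum {M : Matrix V V ℝ} (hM : M.IsHermitian) (c : V → ℝ) :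
    M *ᵥ (∑ i, c i • wvec hM i) = ∑ i, (c i * hM.eigenvalues i) • wvec hM i := by
  rw [← Matrix.mulVecLin_apply, map_sum]
  refine Finset.sum_congr rfl fun i _ => ?_
  rw [_root_.map_smul, Matrix.mulVecLin_apply, wvec_mul, smul_smul]

lemma wvec_form {M : Matrix V V ℝ} (hM : M.IsHermitian) (c : V → ℝ) :
    (∑ i, c i • wvec hM i) ⬝ᵥ (M *ᵥ ∑ j, c j • wvec hM j)
      = ∑ i, hM.eigenvalues i * c i ^ 2 := by
  rw [wvec_mulsum, sum_dotProduct' _ _ _]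
  refine Finset.sum_congr rfl fun i _ => ?_
  rw [smul_dotProduct, dotProduct_sum' _ _ _]
  simp only [dotProduct_smul, wvec_dot, smul_eq_mul, mul_ite, mul_one, mul_zero]
  simp [Finset.sum_ite_eq]
  ring

lemma sLap_isHermitian (G : SimpleGraph V) : (sLap G).IsHermitian := by
  classical
  unfold sLap
  refine Matrix.IsHermitian.add (Matrix.isHermitian_diagonal _) ?_
  rw [Matrix.IsHermitian]
  ext i j
  simp [Matrix.conjTranspose_apply, G.adj_comm i j]

lemma sLap_apply (G : SimpleGraph V) (u v : V) :
    letI := Classical.decRel G.Adj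
    sLap G u v = (if u = v then (G.degree u : ℝ) else 0) + (if G.Adj u v then 1 else 0) := by
  unfold sLap
  simp [Matrix.add_apply, Matrix.diagonal_apply]

lemma sLap_row_sum (G : SimpleGraph V) (u : V) :
    letI := Classical.decRel G.Adj
    ∑ v, sLap G u v = 2 * (G.degree u : ℝ) := by
  letI := Classical.decRel G.Adj
  simp only [sLap_apply G u]
  rw [Finset.sum_add_distrib]
  have h1 : ∑ v, (if u = v then (G.degree u : ℝ) else 0) = (G.degree u : ℝ) := by
    simp [Finset.sum_ite_eq]
  have h2 : ∑ v, (if G.Adj u v then (1:ℝ) else 0) = (G.degree u : ℝ) := by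
    simp [Finset.sum_boole, SimpleGraph.degree, SimpleGraph.neighborFinset_eq_filter]
  rw [h1, h2]; ring

lemma sLap_nonneg (G : SimpleGraph V) (u v : V) : 0 ≤ sLap G u v := by
  letI := Classical.decRel G.Adj
  rw [sLap_apply G u v]
  positivity

lemma qCount_eq (G : SimpleGraph V) (I : Set ℝ) [DecidablePred (· ∈ I)] :
    qCount G I = (Finset.univ.filter
      (fun i => (sLap_isHermitian G).eigenvalues i ∈ I)).card := by
  classical
  unfold qCount qSpec
  rw [roots_charpoly_aux _ (sLap_isHermitian G)]
  rw [Multiset.countP_map]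
  rw [Finset.card, Finset.filter_val]
  exact congrArg Multiset.card
    (@Multiset.filter_congr V (fun a => (sLap_isHermitian G).eigenvalues a ∈ I)
      (fun a => (sLap_isHermitian G).eigenvalues a ∈ I)
      (fun a => Classical.decPred (fun x => x ∈ I) ((sLap_isHermitian G).eigenvalues a))
      (fun a => ‹DecidablePred (· ∈ I)› ((sLap_isHermitian G).eigenvalues a))
      Finset.univ.val (fun x _ => Iff.rfl))


lemma dot_mulVec_expand (M : Matrix V V ℝ) (y : V → ℝ) :
    y ⬝ᵥ (M *ᵥ y) = ∑ u, ∑ v, M u v * (y u * y v) := by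
  simp only [dotProduct, Matrix.mulVec, dotProduct, Finset.mul_sum]
  exact Finset.sum_congr rfl fun u _ => Finset.sum_congr rfl fun v _ => by ring

end Aux

/-- For every finite simple graph `G` on `n` vertices, the independence number `α(G)`
satisfies `α(G) ≤ m_G[δ(G), 2n-2]`. -/
theorem indepNum_le_count_high {V : Type*} [Fintype V] [DecidableEq V]
    (G : SimpleGraph V) :
    indepNum G ≤
      qCount G (Set.Icc ((minDeg G : ℝ)) (2 * (Fintype.card V : ℝ) - 2)) := by
  classical
  letI instAdj : DecidableRel G.Adj := Classical.decRel G.Adj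
  have hQ : (sLap G).IsHermitian := sLap_isHermitian G
  set lam := (sLap_isHermitian G).eigenvalues with hlamdef
  rw [qCount_eq G]
  -- eigenvalue upper bound
  have hub : ∀ i, lam i ≤ 2 * (Fintype.card V : ℝ) - 2 := by
    intro i
    have hdot : wvec (sLap_isHermitian G) i ⬝ᵥ wvec (sLap_isHermitian G) i = 1 := by
      rw [wvec_dot]; simp
    have h1 : lam i = wvec (sLap_isHermitian G) i ⬝ᵥ (sLap G *ᵥ wvec (sLap_isHermitian G) i) := by
      rw [wvec_mul, dotProduct_smul, hdot]; simp [hlamdef]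
    set y := wvec (sLap_isHermitian G) i with hy
    have hsym : ∀ u v, sLap G u v = sLap G v u := by
      intro u v
      have h := congrFun (congrFun hQ v) u
      simpa [Matrix.conjTranspose_apply] using h
    have hsum1 : ∑ v, y v * y v = 1 := hdot
    have step1 : ∑ u, ∑ v, sLap G u v * (y u * y v)
        ≤ ∑ u, ∑ v, sLap G u v * (y u ^ 2 / 2 + y v ^ 2 / 2) := by
      refine Finset.sum_le_sum fun u _ => Finset.sum_le_sum fun v _ => ?_
      refine mul_le_mul_of_nonneg_left ?_ (sLap_nonneg G u v)
      nlinarith [sq_nonneg (y u - y v)]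
    have step2 : ∑ u, ∑ v, sLap G u v * (y u ^ 2 / 2 + y v ^ 2 / 2)
        = ∑ u, (∑ v, sLap G u v) * y u ^ 2 := by
      have e1 : ∀ u v, sLap G u v * (y u ^ 2 / 2 + y v ^ 2 / 2)
          = sLap G u v * (y u ^ 2 / 2) + sLap G u v * (y v ^ 2 / 2) := fun u v => by ring
      simp only [e1]
      simp only [Finset.sum_add_distrib]
      have hswap : ∑ u, ∑ v, sLap G u v * (y v ^ 2 / 2)
          = ∑ u, ∑ v, sLap G u v * (y u ^ 2 / 2) := by
        rw [Finset.sum_comm]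
        exact Finset.sum_congr rfl fun u _ => Finset.sum_congr rfl fun v _ => by
          rw [hsym u v]
      rw [hswap, ← Finset.sum_add_distrib]
      refine Finset.sum_congr rfl fun u _ => ?_
      rw [← Finset.sum_mul]
      ring
    have step3 : ∑ u, (∑ v, sLap G u v) * y u ^ 2
        ≤ (2 * (Fintype.card V : ℝ) - 2) * ∑ u, y u ^ 2 := by
      rw [Finset.mul_sum]
      refine Finset.sum_le_sum fun u _ => ?_
      rw [sLap_row_sum G u]
      refine mul_le_mul_of_nonneg_right ?_ (sq_nonneg _)
      have hd : G.degree u + 1 ≤ Fintype.card V := G.degree_lt_card_verts u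
      have : ((G.degree u : ℕ) : ℝ) + 1 ≤ (Fintype.card V : ℝ) := by exact_mod_cast hd
      linarith
    have hsum2 : ∑ u, y u ^ 2 = 1 := by
      rw [← hsum1]; exact Finset.sum_congr rfl fun u _ => by ring
    rw [h1, dot_mulVec_expand]
    calc ∑ u, ∑ v, sLap G u v * (y u * y v)
        ≤ (2 * (Fintype.card V : ℝ) - 2) * ∑ u, y u ^ 2 := le_trans step1 (le_of_eq step2) |>.trans step3
      _ = 2 * (Fintype.card V : ℝ) - 2 := by rw [hsum2, mul_one]
  -- reduce to the lower-threshold filter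
  have hfilter : (Finset.univ.filter
        (fun i => lam i ∈ Set.Icc ((minDeg G : ℝ)) (2 * (Fintype.card V : ℝ) - 2)))
      = Finset.univ.filter (fun i => (minDeg G : ℝ) ≤ lam i) := by
    refine Finset.filter_congr fun i _ => ?_
    simp only [Set.mem_Icc, iff_iff_implies_and_implies]
    constructor
    · rintro ⟨h1, -⟩; exact h1
    · intro h1; exact ⟨h1, hub i⟩
  rw [hfilter]
  set T' := Finset.univ.filter (fun i => (minDeg G : ℝ) ≤ lam i) with hT'
  -- extract a maximum independent set
  have hmem : indepNum G ∈
      {k | ∃ s : Finset V, (∀ u ∈ s, ∀ v ∈ s, ¬ G.Adj u v) ∧ s.card = k} := by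
    apply Nat.sSup_mem
    · exact ⟨0, ∅, by simp⟩
    · exact ⟨Fintype.card V, by rintro k ⟨s, -, rfl⟩; exact Finset.card_le_univ s⟩
  obtain ⟨S, hSind, hScard⟩ := hmem
  rw [← hScard]
  by_contra hcon
  push_neg at hcon
  -- hcon : T'.card < S.card
  set xfun : (↥S → ℝ) → (V → ℝ) := fun d v => if h : v ∈ S then d ⟨v, h⟩ else 0 with hxfun
  have hxadd : ∀ d e, xfun (d + e) = xfun d + xfun e := by
    intro d e; funext v; by_cases h : v ∈ S <;> simp [hxfun, h]
  have hxsmul : ∀ (a : ℝ) d, xfun (a • d) = a • xfun d := by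
    intro a d; funext v; by_cases h : v ∈ S <;> simp [hxfun, h]
  set Φ : (↥S → ℝ) →ₗ[ℝ] (↥T' → ℝ) :=
    { toFun := fun d => fun j => wvec (sLap_isHermitian G) (j : V) ⬝ᵥ xfun d
      map_add' := by
        intro d e; funext j
        show wvec (sLap_isHermitian G) (j : V) ⬝ᵥ xfun (d + e)
          = wvec (sLap_isHermitian G) (j : V) ⬝ᵥ xfun d
            + wvec (sLap_isHermitian G) (j : V) ⬝ᵥ xfun e
        rw [hxadd, dotProduct_add]
      map_smul' := by
        intro a d; funext j
        show wvec (sLap_isHermitian G) (j : V) ⬝ᵥ xfun (a • d)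
          = a * (wvec (sLap_isHermitian G) (j : V) ⬝ᵥ xfun d)
        rw [hxsmul, dotProduct_smul]
        rfl } with hΦ
  have hninj : ¬ Function.Injective Φ := by
    intro hinj
    have hle := LinearMap.finrank_le_finrank_of_injective hinj
    rw [Module.finrank_fintype_fun_eq_card, Module.finrank_fintype_fun_eq_card,
      Fintype.card_coe, Fintype.card_coe] at hle
    omega
  have hker : LinearMap.ker Φ ≠ ⊥ := by
    intro h
    exact hninj (LinearMap.ker_eq_bot.mp h)
  obtain ⟨d, hdker, hd0⟩ := (Submodule.ne_bot_iff _).mp hker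
  set x : V → ℝ := xfun d with hx
  have hΦd : Φ d = 0 := LinearMap.mem_ker.mp hdker
  have hx0 : x ≠ 0 := by
    obtain ⟨u, hu⟩ := Function.ne_iff.mp hd0
    intro hxz
    apply hu
    have h1 := congrFun hxz (u : V)
    simpa [hx, hxfun] using h1
  set c : V → ℝ := fun i => wvec (sLap_isHermitian G) i ⬝ᵥ x with hc
  have hcT : ∀ i ∈ T', c i = 0 := by
    intro i hi
    exact congrFun hΦd ⟨i, hi⟩
  have hxr : ∑ i, c i • wvec (sLap_isHermitian G) i = x := wvec_repr (sLap_isHermitian G) x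
  have hex : ∃ i, c i ≠ 0 := by
    by_contra hall
    push_neg at hall
    apply hx0
    rw [← hxr]
    simp [hall]
  obtain ⟨i₀, hi₀⟩ := hex
  have hi₀T : i₀ ∉ T' := fun h => hi₀ (hcT i₀ h)
  have hlam₀ : lam i₀ < (minDeg G : ℝ) := by
    by_contra h
    push_neg at h
    exact hi₀T (Finset.mem_filter.mpr ⟨Finset.mem_univ _, h⟩)
  have hqf : x ⬝ᵥ (sLap G *ᵥ x) = ∑ i, lam i * c i ^ 2 := by
    conv_lhs => rw [← hxr]
    exact wvec_form (sLap_isHermitian G) c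
  have hnorm : x ⬝ᵥ x = ∑ i, c i ^ 2 := by
    conv_lhs => rw [← hxr]
    exact wvec_norm (sLap_isHermitian G) c
  have hupper : x ⬝ᵥ (sLap G *ᵥ x) < (minDeg G : ℝ) * (x ⬝ᵥ x) := by
    rw [hqf, hnorm, Finset.mul_sum]
    refine Finset.sum_lt_sum (fun i _ => ?_) ⟨i₀, Finset.mem_univ _, ?_⟩
    · by_cases hi : i ∈ T'
      · rw [hcT i hi]; simp
      · have hlt : lam i < (minDeg G : ℝ) := by
          by_contra hh
          push_neg at hh
          exact hi (Finset.mem_filter.mpr ⟨Finset.mem_univ _, hh⟩)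
        nlinarith [sq_nonneg (c i)]
    · have h2 : 0 < c i₀ ^ 2 := by positivity
      nlinarith
  have hsupp : ∀ v, v ∉ S → x v = 0 := fun v hv => by simp [hx, hxfun, hv]
  have hlower : (minDeg G : ℝ) * (x ⬝ᵥ x) ≤ x ⬝ᵥ (sLap G *ᵥ x) := by
    rw [dot_mulVec_expand]
    have hsplit : ∀ u v : V, sLap G u v * (x u * x v)
        = (if u = v then (G.degree u : ℝ) else 0) * (x u * x v)
          + (if G.Adj u v then (1 : ℝ) else 0) * (x u * x v) := by
      intro u v; rw [sLap_apply G u v]; ring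
    simp only [hsplit]
    simp only [Finset.sum_add_distrib]
    have hB : ∀ u v : V, (if G.Adj u v then (1 : ℝ) else 0) * (x u * x v) = 0 := by
      intro u v
      by_cases hu : u ∈ S
      · by_cases hv : v ∈ S
        · have : ¬ G.Adj u v := hSind u hu v hv
          simp [this]
        · simp [hsupp v hv]
      · simp [hsupp u hu]
    simp only [hB, Finset.sum_const_zero, add_zero]
    have hA : ∀ u : V, ∑ v, (if u = v then (G.degree u : ℝ) else 0) * (x u * x v)
        = (G.degree u : ℝ) * (x u * x u) := by
      intro u
      simp only [ite_mul, zero_mul]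
      rw [Finset.sum_ite_eq Finset.univ u (fun v => (G.degree u : ℝ) * (x u * x v))]
      simp
    simp only [hA]
    rw [show x ⬝ᵥ x = ∑ u, x u * x u from rfl, Finset.mul_sum]
    refine Finset.sum_le_sum fun u _ => ?_
    have hdle : (minDeg G : ℝ) ≤ (G.degree u : ℝ) := by
      have h1 : minDeg G ≤ G.degree u := G.minDegree_le_degree u
      exact_mod_cast h1
    nlinarith [mul_self_nonneg (x u)]
  exact absurd hupper (not_lt.mpr hlower)
end
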